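/- Let A be a 5×5 additive-multiplicative magic square of distinct positive integers with magic product P, and suppose its center entry C (the entry in position (3,3)) satisfies P/C = p^s·q^2 for distinct primes p and q and a positive integer s. Then p = 2 or p = 3. -/

import Mathlib

/-- `A` is an `n × n` additive-multiplicative magic square of pairwise distinct
positive integers, with magic sum `S` and magic product `P`: every row, every
column, and both long diagonals have sum `S` and product `P`. -/
def IsAddMulMagicSquare (n : ℕ) (A : Fin n → Fin n → ℕ) (S P : ℕ) : Prop :=
  (∀ i j, 0 < A i j) ∧
  (Function.Injective fun c : Fin n × Fin n => A c.1 c.2) ∧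
  (∀ i, ∑ j, A i j = S) ∧
  (∀ j, ∑ i, A i j = S) ∧
  (∑ i, A i i = S) ∧
  (∑ i, A i i.rev = S) ∧
  (∀ i, ∏ j, A i j = P) ∧
  (∀ j, ∏ i, A i j = P) ∧
  (∏ i, A i i = P) ∧
  (∏ i, A i i.rev = P)

/-!
Removing the center `C` from the row, the column and the two diagonals through it leaves four
pairwise disjoint sets of four positive integers, all with sum `T = S - C` and product
`p ^ s * q ^ 2`. The maximum of each set divides `p ^ s * q ^ 2`, so it is `p ^ a * q ^ b` with
`b ≤ 2`, and it lies in `[T / 4, T)`. By pigeonhole two of the four maxima share `b`; being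
distinct, one is at least `p` times the other, which forces `p < 4`.
-/

open Finset Function

lemma Nat.exists_eq_pow_mul_pow_of_dvd {p q s t x : ℕ} (hp : p.Prime) (hq : q.Prime)
    (h : x ∣ p ^ s * q ^ t) : ∃ a b, b ≤ t ∧ x = p ^ a * q ^ b := by
  obtain ⟨u, v, hu, hv, rfl⟩ := Nat.dvd_mul.mp h
  obtain ⟨a, -, rfl⟩ := (Nat.dvd_prime_pow hp).mp hu
  obtain ⟨b, hb, rfl⟩ := (Nat.dvd_prime_pow hq).mp hv
  exact ⟨a, b, hb, rfl⟩

lemma Nat.mul_le_of_pow_mul_lt_pow_mul {p a a' c : ℕ} (h : p ^ a * c < p ^ a' * c) :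
    p * (p ^ a * c) ≤ p ^ a' * c := by
  have hpow : p ^ a < p ^ a' := Nat.lt_of_mul_lt_mul_right h
  rcases Nat.lt_trichotomy p 1 with hp | rfl | hp
  · simp [Nat.lt_one_iff.mp hp]
  · simp at hpow
  · rw [← mul_assoc, ← pow_succ']
    gcongr
    · exact hp.le
    · exact (Nat.pow_lt_pow_iff_right hp).mp hpow

lemma Finset.max'_lt_sum {s : Finset ℕ} (hs : 1 < #s) (h0 : 0 ∉ s) :
    s.max' (card_pos.mp (by omega)) < ∑ x ∈ s, x := by
  set m := s.max' (card_pos.mp (by omega))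
  have hm : m ∈ s := max'_mem _ _
  obtain ⟨y, hy⟩ : (s.erase m).Nonempty := card_pos.mp (by rw [card_erase_of_mem hm]; omega)
  have hy0 : 0 < y := Nat.pos_of_ne_zero fun h => h0 (h ▸ mem_of_mem_erase hy)
  have hsplit := add_sum_erase s (fun x => x) hm
  have := single_le_sum (f := fun x => x) (fun _ _ => Nat.zero_le _) hy
  omega

theorem Fintype.card_le_of_pairwise_disjoint_of_sum_eq_of_prod_eq {ι : Type*} [Fintype ι]
    {L : ι → Finset ℕ} {p q s t T : ℕ} (hp : p.Prime) (hq : q.Prime)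
    (hdisj : Pairwise (Disjoint on L)) (h0 : ∀ i, 0 ∉ L i) (hcard : ∀ i, 1 < #(L i) ∧ #(L i) ≤ p)
    (hsum : ∀ i, ∑ x ∈ L i, x = T) (hprod : ∀ i, ∏ x ∈ L i, x = p ^ s * q ^ t) :
    Fintype.card ι ≤ t + 1 := by
  by_contra! hι
  have hne : ∀ i, (L i).Nonempty := fun i => Finset.card_pos.mp (by have := hcard i; omega)
  set m : ι → ℕ := fun i => (L i).max' (hne i)
  have hm_lt : ∀ i, m i < T := fun i => hsum i ▸ max'_lt_sum (hcard i).1 (h0 i)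
  have hT_le : ∀ i, T ≤ p * m i := fun i => by
    calc T = ∑ x ∈ L i, x := (hsum i).symm
      _ ≤ #(L i) * m i := sum_le_card_nsmul _ _ _ fun x hx => le_max' _ x hx
      _ ≤ p * m i := Nat.mul_le_mul_right _ (hcard i).2
  choose a b hbt hab using fun i => Nat.exists_eq_pow_mul_pow_of_dvd hp hq
    (hprod i ▸ dvd_prod_of_mem (fun x => x) (max'_mem (L i) (hne i)))
  obtain ⟨i, -, j, -, hij, hb⟩ := exists_ne_map_eq_of_card_lt_of_maps_to (s := univ)
    (t := range (t + 1)) (f := b) (by simpa using hι)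
    fun i _ => mem_range.mpr (Nat.lt_succ_of_le (hbt i))
  have hm_ne : m i ≠ m j := fun h => disjoint_left.mp (hdisj hij) (max'_mem (L i) (hne i))
    (by rw [show (L i).max' (hne i) = m j from h]; exact max'_mem _ _)
  have key : ∀ u v, b u = b v → m u < m v → False := fun u v hb' hlt => by
    have hu : m u = p ^ a u * q ^ b v := hb' ▸ hab u
    have hv : m v = p ^ a v * q ^ b v := hab v
    have := Nat.mul_le_of_pow_mul_lt_pow_mul (hu ▸ hv ▸ hlt)
    rw [← hu, ← hv] at this
    have := hm_lt v; have := hT_le u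
    omega
  rcases lt_or_gt_of_ne hm_ne with h | h
  · exact key i j hb h
  · exact key j i hb.symm h

def centerLine : Fin 4 → Fin 5 → Fin 5 × Fin 5 :=
  ![fun i => (2, i), fun i => (i, 2), fun i => (i, i), fun i => (i, i.rev)]

lemma centerLine_two (k : Fin 4) : centerLine k 2 = (2, 2) := by
  fin_cases k <;> rfl

lemma centerLine_injective (k : Fin 4) : Injective (centerLine k) := by
  fin_cases k <;> decide

lemma eq_of_centerLine_eq {k k' : Fin 4} {i j : Fin 5} (hi : i ≠ 2)
    (h : centerLine k i = centerLine k' j) : k = k' := by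
  revert k k' i j; decide

namespace IsAddMulMagicSquare

variable {A : Fin 5 → Fin 5 → ℕ} {S P : ℕ}

lemma sum_centerLine (hA : IsAddMulMagicSquare 5 A S P) (k : Fin 4) :
    ∑ i, uncurry A (centerLine k i) = S := by
  obtain ⟨-, -, hrow, hcol, hdiag, hadiag, -⟩ := hA
  fin_cases k
  exacts [hrow 2, hcol 2, hdiag, hadiag]

lemma prod_centerLine (hA : IsAddMulMagicSquare 5 A S P) (k : Fin 4) :
    ∏ i, uncurry A (centerLine k i) = P := by
  obtain ⟨-, -, -, -, -, -, hrow, hcol, hdiag, hadiag⟩ := hA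
  fin_cases k
  exacts [hrow 2, hcol 2, hdiag, hadiag]

end IsAddMulMagicSquare

def puncturedCenterLine (A : Fin 5 → Fin 5 → ℕ) (k : Fin 4) : Finset ℕ :=
  (univ.erase 2).image (uncurry A ∘ centerLine k)

section puncturedCenterLine

variable {A : Fin 5 → Fin 5 → ℕ}

lemma card_puncturedCenterLine (hA : Injective (uncurry A)) (k : Fin 4) :
    #(puncturedCenterLine A k) = 4 :=
  card_image_of_injective _ (hA.comp (centerLine_injective k))

lemma pairwise_disjoint_puncturedCenterLine (hA : Injective (uncurry A)) :
    Pairwise (Disjoint on puncturedCenterLine A) := by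
  intro k k' hkk'
  simp only [onFun, puncturedCenterLine, disjoint_left, mem_image, mem_erase, mem_univ, and_true]
  rintro _ ⟨i, hi, rfl⟩ ⟨j, -, hij⟩
  exact hkk' (eq_of_centerLine_eq hi (hA hij).symm)

lemma zero_notMem_puncturedCenterLine (hA : ∀ i j, 0 < A i j) (k : Fin 4) :
    0 ∉ puncturedCenterLine A k := by
  simp only [puncturedCenterLine, mem_image, not_exists, not_and]
  exact fun i _ h => (hA _ _).ne' h

lemma add_sum_puncturedCenterLine (hA : Injective (uncurry A)) (k : Fin 4) :
    A 2 2 + ∑ x ∈ puncturedCenterLine A k, x = ∑ i, uncurry A (centerLine k i) := by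
  rw [puncturedCenterLine, sum_image (hA.comp (centerLine_injective k)).injOn,
    ← add_sum_erase _ _ (mem_univ 2), centerLine_two]
  rfl

lemma mul_prod_puncturedCenterLine (hA : Injective (uncurry A)) (k : Fin 4) :
    A 2 2 * ∏ x ∈ puncturedCenterLine A k, x = ∏ i, uncurry A (centerLine k i) := by
  rw [puncturedCenterLine, prod_image (hA.comp (centerLine_injective k)).injOn,
    ← mul_prod_erase _ _ (mem_univ 2), centerLine_two]
  rfl

end puncturedCenterLine

theorem center_prime_power_times_prime_sq_forces_two_or_three_general
    (A : Fin 5 → Fin 5 → ℕ) (S P : ℕ)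
    (hA : IsAddMulMagicSquare 5 A S P)
    (p q s : ℕ) (hp : p.Prime) (hq : q.Prime)
    (hPC : P = A 2 2 * (p ^ s * q ^ 2)) :
    p = 2 ∨ p = 3 := by
  by_contra! hp23
  have hp4 : 4 ≤ p := by
    have := hp.two_le
    have : p ≠ 4 := by rintro rfl; norm_num at hp
    omega
  have hinj : Injective (uncurry A) := hA.2.1
  have hsum (k : Fin 4) : ∑ x ∈ puncturedCenterLine A k, x = S - A 2 2 := by
    have := add_sum_puncturedCenterLine hinj k
    rw [hA.sum_centerLine] at this
    omega
  have hprod (k : Fin 4) : ∏ x ∈ puncturedCenterLine A k, x = p ^ s * q ^ 2 := by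
    refine Nat.eq_of_mul_eq_mul_left (hA.1 2 2) ?_
    rw [mul_prod_puncturedCenterLine hinj, hA.prod_centerLine, hPC]
  have hlines := Fintype.card_le_of_pairwise_disjoint_of_sum_eq_of_prod_eq hp hq
    (pairwise_disjoint_puncturedCenterLine hinj) (zero_notMem_puncturedCenterLine hA.1)
    (fun k => by rw [card_puncturedCenterLine hinj]; omega) hsum hprod
  simp at hlines

/-- If the center entry `C` of a 5×5 additive-multiplicative magic square of
distinct positive integers satisfies `P / C = p^s * q^2` for distinct primes
`p, q` and `s ≥ 1`, then `p = 2` or `p = 3`. -/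
theorem center_prime_power_times_prime_sq_forces_two_or_three
    (A : Fin 5 → Fin 5 → ℕ) (S P : ℕ)
    (hA : IsAddMulMagicSquare 5 A S P)
    (p q s : ℕ) (hp : p.Prime) (hq : q.Prime) (hpq : p ≠ q) (hs : 1 ≤ s)
    (hPC : P = A 2 2 * (p ^ s * q ^ 2)) :
    p = 2 ∨ p = 3 :=
  center_prime_power_times_prime_sq_forces_two_or_three_general A S P hA p q s hp hq hPC
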